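/- Let w_r, w_s be nonzero integers, L, N > 0 reals, and let d = gcd(w_r, w_s). Then (L/N) Σ_{n₁, n₂ ≠ 0, n₁w_r = n₂w_s} Δ̂(Ln₁/N) Δ̂(Ln₂/N) < d / √(|w_r w_s|), where Δ̂(0) = 1 and Δ̂(x) = sin²(πx)/(π²x²) for x ≠ 0. -/

import Mathlib

/-!
Write `d = gcd(w_r, w_s)`, `w_r = r d`, `w_s = s d`. Since `r` and `s` are coprime, the nonzero
solutions of `n₁ w_r = n₂ w_s` are exactly `(n s, n r)` with `n ≠ 0`, so the sum is
`∑_{n ≠ 0} Δ̂(α n) Δ̂(β n)` with `α = L s / N`, `β = L r / N`. By Cauchy–Schwarz it suffices to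
show `∑_{n ≠ 0} Δ̂(a n)² < 1 / |a|`. For that, `Δ̂(x)² ≤ min(1, (π |x|)⁻⁴)`; this majorant is
decreasing in `|x|` with `∫₀^∞ min(1, (π x)⁻⁴) dx = 4 / (3π)`, so the integral test bounds the sum
by `8 / (3π |a|) < 1 / |a|`.
-/

open Real

/-- Fourier transform of the tent function. -/
noncomputable def tentHat (x : ℝ) : ℝ :=
  if x = 0 then 1 else (Real.sin (π * x)) ^ 2 / (π ^ 2 * x ^ 2)

open Set MeasureTheory

lemma tentHat_nonneg (x : ℝ) : 0 ≤ tentHat x := by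
  unfold tentHat
  split_ifs <;> positivity

lemma tentHat_le (x : ℝ) : tentHat x ≤ (max (π * |x|) 1 ^ 2)⁻¹ := by
  unfold tentHat
  split_ifs with hx
  · simp [hx]
  · have hπx : π ^ 2 * x ^ 2 = (π * |x|) ^ 2 := by rw [mul_pow, sq_abs]
    rw [hπx, div_le_iff₀ (by positivity)]
    rcases le_total (π * |x|) 1 with h | h
    · rw [max_eq_right h, one_pow, inv_one, one_mul, ← hπx, ← mul_pow]
      exact sin_sq_le_sq
    · rw [max_eq_left h, inv_mul_cancel₀ (by positivity)]
      exact sin_sq_le_one _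

lemma tentHat_sq_le (x : ℝ) : tentHat x ^ 2 ≤ max (π * |x|) 1 ^ (-4 : ℝ) := by
  have hpos : 0 < max (π * |x|) 1 := lt_max_of_lt_right one_pos
  calc tentHat x ^ 2 ≤ ((max (π * |x|) 1 ^ 2)⁻¹) ^ 2 :=
        pow_le_pow_left₀ (tentHat_nonneg x) (tentHat_le x) 2
    _ = max (π * |x|) 1 ^ (-4 : ℝ) := by
        rw [rpow_neg hpos.le, inv_pow, ← pow_mul]
        norm_cast

lemma integrableOn_max_one_rpow {a : ℝ} (ha : a < -1) :
    IntegrableOn (fun y : ℝ ↦ max y 1 ^ a) (Ioi 0) := by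
  rw [← Ioc_union_Ioi_eq_Ioi zero_le_one]
  refine IntegrableOn.union ?_ ?_
  · refine (integrableOn_const (C := (1 : ℝ)) (by simp)).congr_fun (fun y hy ↦ ?_)
      measurableSet_Ioc
    simp [max_eq_right hy.2]
  · exact (integrableOn_Ioi_rpow_of_lt ha one_pos).congr_fun
      (fun y hy ↦ by simp [max_eq_left (mem_Ioi.1 hy).le]) measurableSet_Ioi

lemma integral_max_one_rpow {a : ℝ} (ha : a < -1) :
    ∫ y in Ioi 0, max y 1 ^ a = a / (a + 1) := by
  have hint := integrableOn_max_one_rpow ha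
  rw [← Ioc_union_Ioi_eq_Ioi zero_le_one] at hint ⊢
  rw [setIntegral_union Ioc_disjoint_Ioi_same measurableSet_Ioi
    (hint.mono_set subset_union_left) (hint.mono_set subset_union_right),
    setIntegral_congr_fun measurableSet_Ioc (g := fun _ ↦ (1 : ℝ))
      (fun y hy ↦ by simp [max_eq_right hy.2]),
    setIntegral_congr_fun measurableSet_Ioi (g := fun y ↦ y ^ a)
      (fun y hy ↦ by simp [max_eq_left (mem_Ioi.1 hy).le]),
    integral_Ioi_rpow_of_lt ha one_pos]
  have : a + 1 ≠ 0 := by linarith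
  simp only [integral_const, MeasurableSet.univ, measureReal_restrict_apply, univ_inter,
    volume_real_Ioc, sub_zero, zero_le_one, sup_of_le_left, smul_eq_mul, mul_one, one_rpow]
  field_simp
  ring

lemma AntitoneOn.tsum_comp_mul_add_one_le_integral {f : ℝ → ℝ} (anti : AntitoneOn f (Ici 0))
    (integrable : IntegrableOn f (Ioi 0)) (nonneg : ∀ t ∈ Ioi 0, 0 ≤ f t) {c : ℝ} (hc : 0 < c) :
    Summable (fun n : ℕ ↦ f (c * (n + 1))) ∧
      ∑' n : ℕ, f (c * (n + 1)) ≤ c⁻¹ * ∫ t in Ioi 0, f t := by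
  have anti' : AntitoneOn (fun t ↦ f (c * t)) (Ici 0) := fun x hx y hy hxy ↦
    anti (mem_Ici.2 (by have := mem_Ici.1 hx; positivity))
      (mem_Ici.2 (by have := mem_Ici.1 hy; positivity)) (by gcongr)
  have integrable' : IntegrableOn (fun t ↦ f (c * t)) (Ioi 0) :=
    (integrableOn_Ioi_comp_mul_left_iff f 0 hc).2 (by rwa [mul_zero])
  have nonneg' : ∀ t ∈ Ioi (0 : ℝ), 0 ≤ f (c * t) := fun t ht ↦
    nonneg _ (mul_pos hc ht)
  refine ⟨?_, ?_⟩
  · simpa using (summable_nat_add_iff 1).2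
      (anti'.summable_of_integrableOn_Ioi_zero integrable' nonneg')
  · simpa [integral_comp_mul_left_Ioi f 0 hc] using
      anti'.tsum_add_one_le_integral integrable' nonneg'

lemma HasSum.subtype_ne_zero_natAbs {M : Type*} [AddCommMonoid M] [TopologicalSpace M]
    [ContinuousAdd M] {f : ℕ → M} {S : M} (h : HasSum (fun k : ℕ ↦ f (k + 1)) S) :
    HasSum (fun n : {n : ℤ // n ≠ 0} ↦ f (n : ℤ).natAbs) (S + S) := by
  refine (hasSum_subtype_iff_indicator (f := fun n : ℤ ↦ f n.natAbs) (s := {n | n ≠ 0})).2 ?_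
  have key := HasSum.of_add_one_of_neg_add_one
    (f := {n : ℤ | n ≠ 0}.indicator (fun n ↦ f n.natAbs)) (m := S) (m' := S) ?_ ?_
  · simpa using key
  all_goals
    refine h.congr_fun fun k ↦ ?_
    rw [indicator_of_mem (by simp; omega)]
    congr 1

lemma summable_and_tsum_tentHat_sq_lt {a : ℝ} (ha : a ≠ 0) :
    Summable (fun n : {n : ℤ // n ≠ 0} ↦ tentHat (a * n) ^ 2) ∧
      ∑' n : {n : ℤ // n ≠ 0}, tentHat (a * n) ^ 2 < |a|⁻¹ := by
  set c := π * |a|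
  have hc : 0 < c := by positivity
  have anti : Antitone (fun y : ℝ ↦ max y 1 ^ (-4 : ℝ)) := fun x y hxy ↦
    rpow_le_rpow_of_nonpos (lt_max_of_lt_right one_pos) (max_le_max_right 1 hxy) (by norm_num)
  obtain ⟨hsum, hle⟩ := anti.antitoneOn (Ici 0) |>.tsum_comp_mul_add_one_le_integral
    (integrableOn_max_one_rpow (by norm_num)) (fun y _ ↦ by positivity) hc
  rw [integral_max_one_rpow (by norm_num)] at hle
  have hmajorant : HasSum (fun n : {n : ℤ // n ≠ 0} ↦ max (c * (n : ℤ).natAbs) 1 ^ (-4 : ℝ))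
      (∑' k : ℕ, max (c * (k + 1)) 1 ^ (-4 : ℝ) + ∑' k : ℕ, max (c * (k + 1)) 1 ^ (-4 : ℝ)) :=
    HasSum.subtype_ne_zero_natAbs (f := fun k : ℕ ↦ max (c * k) 1 ^ (-4 : ℝ))
      (by exact_mod_cast hsum.hasSum)
  have hterm : ∀ n : {n : ℤ // n ≠ 0},
      tentHat (a * n) ^ 2 ≤ max (c * (n : ℤ).natAbs) 1 ^ (-4 : ℝ) := fun n ↦ by
    simpa [c, Nat.cast_natAbs, abs_mul, mul_assoc] using tentHat_sq_le (a * n)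
  have hsum' := hmajorant.summable.of_nonneg_of_le (fun _ ↦ sq_nonneg _) hterm
  refine ⟨hsum', (hsum'.tsum_le_tsum hterm hmajorant.summable).trans_lt ?_⟩
  rw [hmajorant.tsum_eq]
  have h3π : 8 < 3 * π := by linarith [pi_gt_three]
  calc _ ≤ 2 * (c⁻¹ * (-4 / (-4 + 1))) := by linarith
    _ = 8 / (3 * π) * |a|⁻¹ := by simp only [c]; field_simp; ring
    _ < |a|⁻¹ := by
        apply mul_lt_of_lt_one_left (by positivity)
        rw [div_lt_one (by positivity)]
        exact h3π

lemma tsum_mul_le_sqrt_mul_sqrt {ι : Type*} {f g : ι → ℝ} (hf : ∀ i, 0 ≤ f i) (hg : ∀ i, 0 ≤ g i)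
    (hf2 : Summable fun i ↦ f i ^ 2) (hg2 : Summable fun i ↦ g i ^ 2) :
    ∑' i, f i * g i ≤ √(∑' i, f i ^ 2) * √(∑' i, g i ^ 2) := by
  simp_rw [← rpow_two] at hf2 hg2 ⊢
  simpa [sqrt_eq_rpow] using inner_le_Lp_mul_Lq_tsum_of_nonneg .two_two hf hg hf2 hg2

lemma tsum_tentHat_mul_tentHat_lt {a b : ℝ} (ha : a ≠ 0) (hb : b ≠ 0) :
    ∑' n : {n : ℤ // n ≠ 0}, tentHat (a * n) * tentHat (b * n) < (√|a * b|)⁻¹ := by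
  obtain ⟨hsa, hlta⟩ := summable_and_tsum_tentHat_sq_lt ha
  obtain ⟨hsb, hltb⟩ := summable_and_tsum_tentHat_sq_lt hb
  calc _ ≤ √(∑' n : {n : ℤ // n ≠ 0}, tentHat (a * n) ^ 2) *
          √(∑' n : {n : ℤ // n ≠ 0}, tentHat (b * n) ^ 2) :=
        tsum_mul_le_sqrt_mul_sqrt (fun _ ↦ tentHat_nonneg _) (fun _ ↦ tentHat_nonneg _) hsa hsb
    _ < √|a|⁻¹ * √|b|⁻¹ :=
        mul_lt_mul'' (sqrt_lt_sqrt (tsum_nonneg fun _ ↦ sq_nonneg _) hlta)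
          (sqrt_lt_sqrt (tsum_nonneg fun _ ↦ sq_nonneg _) hltb) (sqrt_nonneg _) (sqrt_nonneg _)
    _ = (√|a * b|)⁻¹ := by rw [abs_mul, sqrt_mul (abs_nonneg a), mul_inv, sqrt_inv, sqrt_inv]

lemma IsCoprime.exists_eq_mul_of_mul_eq_mul {r s a b : ℤ} (hrs : IsCoprime r s) (hs : s ≠ 0)
    (h : a * r = b * s) : ∃ n, a = n * s ∧ b = n * r := by
  obtain ⟨n, rfl⟩ : s ∣ a := hrs.symm.dvd_of_dvd_mul_right ⟨b, by rw [h, mul_comm]⟩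
  exact ⟨n, mul_comm s n, mul_left_cancel₀ hs (by linarith)⟩

noncomputable def nonzeroSolutionsEquiv {r s d : ℤ} (hrs : IsCoprime r s) (hr : r ≠ 0)
    (hs : s ≠ 0) (hd : d ≠ 0) :
    {n : ℤ // n ≠ 0} ≃ {p : ℤ × ℤ // p.1 ≠ 0 ∧ p.2 ≠ 0 ∧ p.1 * (r * d) = p.2 * (s * d)} :=
  Equiv.ofBijective
    (fun n ↦ ⟨(n * s, n * r), mul_ne_zero n.2 hs, mul_ne_zero n.2 hr, by ring⟩)
    ⟨fun n m h ↦ Subtype.ext (mul_right_cancel₀ hs (congrArg (·.1.1) h)), fun p ↦ by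
      obtain ⟨h₁, -, h⟩ := p.2
      obtain ⟨n, hn₁, hn₂⟩ := hrs.exists_eq_mul_of_mul_eq_mul hs
        (mul_right_cancel₀ hd (by simpa only [mul_assoc] using h))
      exact ⟨⟨n, by rintro rfl; simp_all⟩, Subtype.ext (Prod.ext hn₁.symm hn₂.symm)⟩⟩

lemma nonzeroSolutionsEquiv_apply {r s d : ℤ} (hrs : IsCoprime r s) (hr : r ≠ 0) (hs : s ≠ 0)
    (hd : d ≠ 0) (n : {n : ℤ // n ≠ 0}) :
    (nonzeroSolutionsEquiv hrs hr hs hd n : ℤ × ℤ) = (n * s, n * r) := rfl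

theorem gcd_sum_bound (wr ws : ℤ) (hr : wr ≠ 0) (hs : ws ≠ 0) (L N : ℝ)
    (hL : 0 < L) (hN : 0 < N) :
    (L / N) * ∑' p : {p : ℤ × ℤ // p.1 ≠ 0 ∧ p.2 ≠ 0 ∧ p.1 * wr = p.2 * ws},
        tentHat (L * ((p : ℤ × ℤ).1 : ℝ) / N) * tentHat (L * ((p : ℤ × ℤ).2 : ℝ) / N)
      < (Int.gcd wr ws : ℝ) / Real.sqrt |((wr * ws : ℤ) : ℝ)| := by
  have hd := Int.gcd_pos_of_ne_zero_left ws hr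
  obtain ⟨r, s, hrs, hwr, hws⟩ := Int.exists_gcd_one hd
  generalize Int.gcd wr ws = d at hd hwr hws ⊢
  subst hwr hws
  rw [← (nonzeroSolutionsEquiv (Int.isCoprime_iff_gcd_eq_one.2 hrs) (left_ne_zero_of_mul hr)
    (left_ne_zero_of_mul hs) (by exact_mod_cast hd.ne')).tsum_eq]
  have hcast (n t : ℤ) : L * ((n * t : ℤ) : ℝ) / N = L * t / N * n := by push_cast; ring
  simp_rw [nonzeroSolutionsEquiv_apply, hcast]
  have hαβ : L * s / N * (L * r / N) = (L / N) ^ 2 * (r * s) := by ring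
  have hrdsd : ((r * d * (s * d) : ℤ) : ℝ) = (d : ℝ) ^ 2 * (r * s) := by push_cast; ring
  have hr0 : (r : ℝ) ≠ 0 := by exact_mod_cast left_ne_zero_of_mul hr
  have hs0 : (s : ℝ) ≠ 0 := by exact_mod_cast left_ne_zero_of_mul hs
  calc _ < L / N * (√|L * s / N * (L * r / N)|)⁻¹ := by
        gcongr
        exact tsum_tentHat_mul_tentHat_lt (by positivity) (by positivity)
    _ = _ := by
        rw [hαβ, hrdsd, abs_mul, abs_mul ((d : ℝ) ^ 2), abs_sq, abs_sq, sqrt_mul (sq_nonneg _),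
          sqrt_mul (sq_nonneg _), sqrt_sq (by positivity), sqrt_sq (by positivity)]
        field_simp
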